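/- If ring extensions A ⊇ B and R ⊇ S are Morita equivalent via bimodules P, Q with Q ⊗_S R ≅ P as B-R-bimodules, then the centralizers are isomorphic: A^B ≅ R^S. -/

import Mathlib

open TensorProduct MulOpposite

universe u

variable {A B R S : Type u} [Ring A] [Ring B] [Ring R] [Ring S]
  (f : B →+* A) (g : S →+* R)
  (P : Type u) [AddCommGroup P] [Module A P] [Module Rᵐᵒᵖ P]
    [SMulCommClass A Rᵐᵒᵖ P]
  (Pd : Type u) [AddCommGroup Pd] [Module R Pd] [Module Aᵐᵒᵖ Pd]
    [SMulCommClass R Aᵐᵒᵖ Pd]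
  (Q : Type u) [AddCommGroup Q] [Module B Q] [Module Sᵐᵒᵖ Q]
    [SMulCommClass B Sᵐᵒᵖ Q]
  (Qd : Type u) [AddCommGroup Qd] [Module S Qd] [Module Bᵐᵒᵖ Qd]
    [SMulCommClass S Bᵐᵒᵖ Qd]

/-- The tensor product `M ⊗_T N` of a right `T`-module and a left `T`-module
over a (possibly noncommutative) ring `T`, as a quotient of `M ⊗_ℤ N`. -/
noncomputable def NCT (T M N : Type u) [Ring T] [AddCommGroup M]
    [Module Tᵐᵒᵖ M] [AddCommGroup N] [Module T N] : Type u :=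
  (M ⊗[ℤ] N) ⧸ Submodule.span ℤ
    {z : M ⊗[ℤ] N | ∃ (t : T) (m : M) (n : N),
      z = (op t • m) ⊗ₜ[ℤ] n - m ⊗ₜ[ℤ] (t • n)}

noncomputable instance (T M N : Type u) [Ring T] [AddCommGroup M]
    [Module Tᵐᵒᵖ M] [AddCommGroup N] [Module T N] :
    AddCommGroup (NCT T M N) :=
  inferInstanceAs (AddCommGroup ((M ⊗[ℤ] N) ⧸ Submodule.span ℤ _))

/-- The class of the simple tensor `m ⊗ n` in `M ⊗_T N`. -/
noncomputable def ncmk (T M N : Type u) [Ring T] [AddCommGroup M]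
    [Module Tᵐᵒᵖ M] [AddCommGroup N] [Module T N] (m : M) (n : N) :
    NCT T M N :=
  Submodule.Quotient.mk (m ⊗ₜ[ℤ] n)

/-- `Q ⊗_S R`, where `R` is a left `S`-module along `g : S →+* R`. -/
noncomputable def QtensR : Type u :=
  (Q ⊗[ℤ] R) ⧸ Submodule.span ℤ
    {z : Q ⊗[ℤ] R | ∃ (s : S) (q : Q) (r : R),
      z = (op s • q) ⊗ₜ[ℤ] r - q ⊗ₜ[ℤ] (g s * r)}

noncomputable instance : AddCommGroup (QtensR g Q) :=
  inferInstanceAs (AddCommGroup ((Q ⊗[ℤ] R) ⧸ Submodule.span ℤ _))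

noncomputable def qrmk (q : Q) (r : R) : QtensR g Q :=
  Submodule.Quotient.mk (q ⊗ₜ[ℤ] r)

/-!
Both centralizers are identified with the ring of `B`-`R`-bimodule endomorphisms of `P`.

Since `P` is invertible, `A = End(P_R)`: an `R`-linear `φ` induces `φ ⊗ 1` on `P ⊗_R P* ≅ A`,
a right `A`-linear map, hence left multiplication by some `a`; and `(φ - a) ⊗ 1 = 0` forces
`φ = a` after tensoring with `P` and using `P* ⊗_A P ≅ R`. So the bimodule endomorphisms of `P`
are the left multiplications by elements of `A^B`.

On the other side `P ≅ Q ⊗_S R`. As `Q` is invertible, every `B`-linear endomorphism of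
`Q ⊗_S N` has the form `1 ⊗ ψ`; for `N = R` and `ψ` also right `R`-linear, `ψ` is left
multiplication by an element of `R^S`.
-/

namespace NCT

variable {T M N M' N' X : Type u} [Ring T] [AddCommGroup M] [Module Tᵐᵒᵖ M]
  [AddCommGroup N] [Module T N] [AddCommGroup M'] [Module Tᵐᵒᵖ M']
  [AddCommGroup N'] [Module T N'] [AddCommGroup X]

theorem ncmk_op_smul (t : T) (m : M) (n : N) :
    ncmk T M N (op t • m) n = ncmk T M N m (t • n) :=
  (Submodule.Quotient.eq _).mpr (Submodule.subset_span ⟨t, m, n, rfl⟩)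

theorem ncmk_add_left (m m' : M) (n : N) :
    ncmk T M N (m + m') n = ncmk T M N m n + ncmk T M N m' n := by
  simp only [ncmk, add_tmul]; rfl

theorem ncmk_add_right (m : M) (n n' : N) :
    ncmk T M N m (n + n') = ncmk T M N m n + ncmk T M N m n' := by
  simp only [ncmk, tmul_add]; rfl

theorem ncmk_zero_left (n : N) : ncmk T M N 0 n = 0 := by
  simp only [ncmk, zero_tmul]; rfl

theorem ncmk_zero_right (m : M) : ncmk T M N m 0 = 0 := by
  simp only [ncmk, tmul_zero]; rfl

theorem ncmk_sub_left (m m' : M) (n : N) :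
    ncmk T M N (m - m') n = ncmk T M N m n - ncmk T M N m' n := by
  simp only [ncmk, sub_tmul]; rfl

theorem ncmk_sub_right (m : M) (n n' : N) :
    ncmk T M N m (n - n') = ncmk T M N m n - ncmk T M N m n' := by
  simp only [ncmk, tmul_sub]; rfl

@[elab_as_elim]
theorem induction_on {C : NCT T M N → Prop} (z : NCT T M N) (zero : C 0)
    (ncmk : ∀ m n, C (ncmk T M N m n)) (add : ∀ z w, C z → C w → C (z + w)) : C z := by
  obtain ⟨w, rfl⟩ := Submodule.Quotient.mk_surjective _ z
  induction w using TensorProduct.induction_on with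
  | zero => exact zero
  | tmul m n => exact ncmk m n
  | add x y hx hy => exact add _ _ hx hy

theorem addMonoidHom_ext {F G : NCT T M N →+ X}
    (h : ∀ m n, F (ncmk T M N m n) = G (ncmk T M N m n)) : F = G := by
  ext z
  induction z using induction_on with
  | zero => simp
  | ncmk m n => exact h m n
  | add z w hz hw => rw [map_add, map_add, hz, hw]

noncomputable def lift (h : M → N → X) (hl : ∀ m m' n, h (m + m') n = h m n + h m' n)
    (hr : ∀ m n n', h m (n + n') = h m n + h m n')
    (hbal : ∀ (t : T) m n, h (op t • m) n = h m (t • n)) : NCT T M N →+ X :=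
  let h₂ : M →+ N →+ X :=
    AddMonoidHom.mk' (fun m => AddMonoidHom.mk' (h m) (hr m)) fun m m' =>
      AddMonoidHom.ext (hl m m')
  ((Submodule.span ℤ _).liftQ (liftAddHom h₂ fun k m n => by simp).toIntLinearMap <| by
    rw [Submodule.span_le]
    rintro _ ⟨t, m, n, rfl⟩
    simp [h₂, hbal]).toAddMonoidHom

@[simp]
theorem lift_ncmk (h : M → N → X) (hl hr hbal) (m : M) (n : N) :
    NCT.lift h hl hr hbal (ncmk T M N m n) = h m n :=
  rfl

noncomputable def map (φ : M →+ M') (ψ : N →+ N')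
    (hφ : ∀ (t : T) m, φ (op t • m) = op t • φ m) (hψ : ∀ (t : T) n, ψ (t • n) = t • ψ n) :
    NCT T M N →+ NCT T M' N' :=
  NCT.lift (fun m n => ncmk T M' N' (φ m) (ψ n))
    (fun m m' n => by rw [map_add, ncmk_add_left])
    (fun m n n' => by rw [map_add, ncmk_add_right])
    (fun t m n => by rw [hφ, hψ, ncmk_op_smul])

@[simp]
theorem map_ncmk (φ : M →+ M') (ψ : N →+ N') (hφ hψ) (m : M) (n : N) :
    map φ ψ hφ hψ (ncmk T M N m n) = ncmk T M' N' (φ m) (ψ n) :=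
  rfl

noncomputable def lsmul {U : Type u} [Ring U] [Module U M] [SMulCommClass U Tᵐᵒᵖ M] (u : U) :
    NCT T M N →+ NCT T M N :=
  map (DistribSMul.toAddMonoidHom M u) (AddMonoidHom.id N) (fun t m => smul_comm u (op t) m)
    fun _ _ => rfl

@[simp]
theorem lsmul_ncmk {U : Type u} [Ring U] [Module U M] [SMulCommClass U Tᵐᵒᵖ M] (u : U) (m : M)
    (n : N) : lsmul u (ncmk T M N m n) = ncmk T M N (u • m) n :=
  rfl

end NCT

section Contract

variable {U T X Xd N : Type u} [Ring U] [Ring T] [AddCommGroup X] [Module U X] [Module Tᵐᵒᵖ X]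
  [AddCommGroup Xd] [Module Uᵐᵒᵖ Xd] [AddCommGroup N] [Module T N]
  (ε : NCT U Xd X ≃+ T)
  (hε : ∀ (t : T) xd x, ε (ncmk U Xd X xd (op t • x)) = ε (ncmk U Xd X xd x) * t)

noncomputable def contract (xd : Xd) : NCT T X N →+ N :=
  NCT.lift (fun x n => ε (ncmk U Xd X xd x) • n)
    (fun _ _ _ => by rw [NCT.ncmk_add_right, map_add, add_smul])
    (fun _ _ _ => smul_add _ _ _)
    (fun t x n => by rw [hε, mul_smul])

@[simp]
theorem contract_ncmk (xd : Xd) (x : X) (n : N) :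
    contract ε hε xd (ncmk T X N x n) = ε (ncmk U Xd X xd x) • n :=
  rfl

theorem contract_add (xd xd' : Xd) (z : NCT T X N) :
    contract ε hε (xd + xd') z = contract ε hε xd z + contract ε hε xd' z := by
  induction z using NCT.induction_on with
  | zero => simp
  | ncmk x n => simp [NCT.ncmk_add_left, add_smul]
  | add z w hz hw => rw [map_add, map_add, map_add, hz, hw, add_add_add_comm]

theorem contract_op_smul [SMulCommClass U Tᵐᵒᵖ X] (u : U) (xd : Xd) (z : NCT T X N) :
    contract ε hε (op u • xd) z = contract ε hε xd (NCT.lsmul u z) := by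
  induction z using NCT.induction_on with
  | zero => simp
  | ncmk x n => simp [NCT.ncmk_op_smul]
  | add z w hz hw => simp only [map_add, hz, hw]

end Contract

section Invertible

variable {U T X Xd M N : Type u} [Ring U] [Ring T]

theorem faithfulSMul_of_nctEquiv [AddCommGroup X] [Module U X] [Module Tᵐᵒᵖ X]
    [AddCommGroup Xd] [Module T Xd] (ε : NCT T X Xd ≃+ U)
    (hε : ∀ (u : U) x xd, ε (ncmk T X Xd (u • x) xd) = u * ε (ncmk T X Xd x xd)) :
    FaithfulSMul U X where
  eq_of_smul_eq_smul {u u'} h := by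
    have key : ∀ z, (u - u') * ε z = 0 := fun z => by
      induction z using NCT.induction_on with
      | zero => simp
      | ncmk x xd => rw [← hε, sub_smul, h, sub_self, NCT.ncmk_zero_left, map_zero]
      | add z w hz hw => rw [map_add, mul_add, hz, hw, add_zero]
    simpa [sub_eq_zero] using key (ε.symm 1)

theorem eq_zero_of_forall_ncmk_eq_zero_left [AddCommGroup M] [Module Tᵐᵒᵖ M]
    [AddCommGroup Xd] [Module T Xd] [Module Uᵐᵒᵖ Xd] [AddCommGroup X] [Module U X]
    (ε : NCT U Xd X ≃+ T)
    (hε : ∀ (t : T) xd x, ε (ncmk U Xd X (t • xd) x) = t * ε (ncmk U Xd X xd x))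
    {m : M} (hm : ∀ xd, ncmk T M Xd m xd = 0) : m = 0 := by
  have key : ∀ z, op (ε z) • m = 0 := fun z => by
    induction z using NCT.induction_on with
    | zero => simp
    | ncmk xd x =>
      let β : NCT T M Xd →+ M := NCT.lift (fun m xd => op (ε (ncmk U Xd X xd x)) • m)
        (fun _ _ _ => smul_add _ _ _)
        (fun _ _ _ => by rw [NCT.ncmk_add_left, map_add, op_add, add_smul])
        (fun t m xd => by rw [smul_smul, ← op_mul, hε])
      simpa [β] using congrArg β (hm xd)
    | add z w hz hw => rw [map_add, op_add, add_smul, hz, hw, add_zero]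
  simpa using key (ε.symm 1)

theorem eq_zero_of_forall_ncmk_eq_zero_right [AddCommGroup X] [Module U X] [Module Tᵐᵒᵖ X]
    [AddCommGroup Xd] [Module Uᵐᵒᵖ Xd] [AddCommGroup N] [Module T N] (ε : NCT U Xd X ≃+ T)
    (hε : ∀ (t : T) xd x, ε (ncmk U Xd X xd (op t • x)) = ε (ncmk U Xd X xd x) * t)
    {n : N} (hn : ∀ x, ncmk T X N x n = 0) : n = 0 := by
  have key : ∀ z, ε z • n = 0 := fun z => by
    induction z using NCT.induction_on with
    | zero => simp
    | ncmk xd x => simpa using congrArg (contract ε hε xd) (hn x)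
    | add z w hz hw => rw [map_add, add_smul, hz, hw, add_zero]
  simpa using key (ε.symm 1)

theorem exists_eq_smul_of_map_op_smul [AddCommGroup X] [Module U X] [Module Tᵐᵒᵖ X]
    [AddCommGroup Xd] [Module T Xd] [Module Uᵐᵒᵖ Xd] [SMulCommClass T Uᵐᵒᵖ Xd]
    (ε₁ : NCT T X Xd ≃+ U)
    (h₁l : ∀ (u : U) x xd, ε₁ (ncmk T X Xd (u • x) xd) = u * ε₁ (ncmk T X Xd x xd))
    (h₁r : ∀ (u : U) x xd, ε₁ (ncmk T X Xd x (op u • xd)) = ε₁ (ncmk T X Xd x xd) * u)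
    (ε₂ : NCT U Xd X ≃+ T)
    (h₂l : ∀ (t : T) xd x, ε₂ (ncmk U Xd X (t • xd) x) = t * ε₂ (ncmk U Xd X xd x))
    (φ : X →+ X) (hφ : ∀ (t : T) x, φ (op t • x) = op t • φ x) :
    ∃ u : U, ∀ x, φ x = u • x := by
  let Φ := NCT.map φ (AddMonoidHom.id Xd) hφ fun _ _ => rfl
  let ρ (u : U) : NCT T X Xd →+ NCT T X Xd := NCT.map (AddMonoidHom.id X)
    (DistribSMul.toAddMonoidHom Xd (op u)) (fun _ _ => rfl) fun t xd => (smul_comm t _ xd).symm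
  have ε₁_ρ (u : U) (z) : ε₁ (ρ u z) = ε₁ z * u := by
    induction z using NCT.induction_on with
    | zero => simp
    | ncmk x xd => exact h₁r u x xd
    | add z w hz hw => rw [map_add, map_add, hz, hw, map_add, add_mul]
  have Φ_ρ (u : U) (z) : Φ (ρ u z) = ρ u (Φ z) := by
    induction z using NCT.induction_on with
    | zero => simp
    | ncmk x xd => rfl
    | add z w hz hw => simp only [map_add, hz, hw]
  -- right `U`-linearity of `ε₁ ∘ Φ ∘ ε₁⁻¹` makes it left multiplication by its value at `1`
  have hΦ (z) : ε₁ (Φ z) = ε₁ (Φ (ε₁.symm 1)) * ε₁ z := by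
    have hz : z = ρ (ε₁ z) (ε₁.symm 1) :=
      ε₁.injective (by rw [ε₁_ρ, ε₁.apply_symm_apply, one_mul])
    conv_lhs => rw [hz, Φ_ρ, ε₁_ρ]
  refine ⟨ε₁ (Φ (ε₁.symm 1)), fun x => sub_eq_zero.mp <|
    eq_zero_of_forall_ncmk_eq_zero_left ε₂ h₂l fun xd => ?_⟩
  rw [NCT.ncmk_sub_left, sub_eq_zero]
  exact ε₁.injective ((hΦ (ncmk T X Xd x xd)).trans (h₁l _ x xd).symm)

theorem exists_forall_apply_ncmk_eq_ncmk [AddCommGroup X] [Module U X] [Module Tᵐᵒᵖ X]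
    [SMulCommClass U Tᵐᵒᵖ X] [AddCommGroup Xd] [Module T Xd] [Module Uᵐᵒᵖ Xd]
    [SMulCommClass T Uᵐᵒᵖ Xd] [AddCommGroup N] [Module T N]
    (ε₁ : NCT T X Xd ≃+ U)
    (h₁l : ∀ (u : U) x xd, ε₁ (ncmk T X Xd (u • x) xd) = u * ε₁ (ncmk T X Xd x xd))
    (h₁r : ∀ (u : U) x xd, ε₁ (ncmk T X Xd x (op u • xd)) = ε₁ (ncmk T X Xd x xd) * u)
    (ε₂ : NCT U Xd X ≃+ T)
    (h₂l : ∀ (t : T) xd x, ε₂ (ncmk U Xd X (t • xd) x) = t * ε₂ (ncmk U Xd X xd x))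
    (h₂r : ∀ (t : T) xd x, ε₂ (ncmk U Xd X xd (op t • x)) = ε₂ (ncmk U Xd X xd x) * t)
    (φ : NCT T X N →+ NCT T X N) (hφ : ∀ (u : U) z, φ (NCT.lsmul u z) = NCT.lsmul u (φ z))
    (n : N) : ∃ n', ∀ x, φ (ncmk T X N x n) = ncmk T X N x n' := by
  -- `ε₁` and `ε₂` need not be compatible; `c` is a pairing that is: `c x xd • y = x • ε₂ (xd ⊗ y)`
  choose c hc using fun x xd => exists_eq_smul_of_map_op_smul ε₁ h₁l h₁r ε₂ h₂l
    (AddMonoidHom.mk' (fun y => op (ε₂ (ncmk U Xd X xd y)) • x)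
      fun y y' => by rw [NCT.ncmk_add_right, map_add, op_add, add_smul])
    fun t y => by simp only [AddMonoidHom.mk'_apply, h₂r, op_mul, mul_smul]
  have ncmk_contract (x : X) (xd : Xd) (z) :
      ncmk T X N x (contract ε₂ h₂r xd z) = NCT.lsmul (c x xd) z := by
    induction z using NCT.induction_on with
    | zero => simp [NCT.ncmk_zero_right]
    | ncmk y m =>
      rw [contract_ncmk, ← NCT.ncmk_op_smul, NCT.lsmul_ncmk]
      exact congrArg (ncmk T X N · m) (hc x xd y)
    | add z w hz hw => rw [map_add, map_add, NCT.ncmk_add_right, hz, hw]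
  let Θ : NCT U Xd X →+ N := NCT.lift (fun xd y => contract ε₂ h₂r xd (φ (ncmk T X N y n)))
    (fun _ _ _ => contract_add ε₂ h₂r _ _ _)
    (fun _ _ _ => by rw [NCT.ncmk_add_left, map_add, map_add])
    (fun u xd y => by rw [contract_op_smul, ← hφ, NCT.lsmul_ncmk])
  refine ⟨Θ (ε₂.symm 1), fun x => ?_⟩
  have key (z) : ncmk T X N x (Θ z) = φ (ncmk T X N (op (ε₂ z) • x) n) := by
    induction z using NCT.induction_on with
    | zero => simp [NCT.ncmk_zero_right, NCT.ncmk_zero_left]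
    | ncmk xd y =>
      rw [NCT.lift_ncmk, ncmk_contract, ← hφ, NCT.lsmul_ncmk, ← hc]
      rfl
    | add z w hz hw =>
      rw [map_add, NCT.ncmk_add_right, hz, hw, map_add, op_add, add_smul, NCT.ncmk_add_left,
        map_add]
  simpa using (key (ε₂.symm 1)).symm

end Invertible

noncomputable def AddEquiv.addMonoidEndCongr {M N : Type u} [AddCommGroup M] [AddCommGroup N]
    (e : M ≃+ N) : AddMonoid.End M ≃+* AddMonoid.End N where
  toFun φ := (e : M →+ N).comp ((φ : M →+ M).comp e.symm)
  invFun ψ := (e.symm : N →+ M).comp ((ψ : N →+ N).comp e)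
  left_inv φ := AddMonoidHom.ext fun x => by
    change e.symm (e (φ (e.symm (e x)))) = φ x
    simp
  right_inv ψ := AddMonoidHom.ext fun x => by
    change e (e.symm (ψ (e (e.symm x)))) = ψ x
    simp
  map_mul' φ ψ := AddMonoidHom.ext fun x => by
    change e (φ (ψ (e.symm x))) = e (φ (e.symm (e (ψ (e.symm x)))))
    simp
  map_add' φ ψ := AddMonoidHom.ext fun x => map_add e _ _

@[simp]
theorem AddEquiv.addMonoidEndCongr_apply {M N : Type u} [AddCommGroup M] [AddCommGroup N]
    (e : M ≃+ N) (φ : AddMonoid.End M) (x : N) : e.addMonoidEndCongr φ x = e (φ (e.symm x)) :=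
  rfl

theorem nonempty_ringEquiv_of_range_eq {R₁ R₂ E : Type u} [Ring R₁] [Ring R₂] [Ring E]
    {φ₁ : R₁ →+* E} {φ₂ : R₂ →+* E} (h₁ : Function.Injective φ₁) (h₂ : Function.Injective φ₂)
    (h : φ₁.range = φ₂.range) : Nonempty (R₁ ≃+* R₂) :=
  ⟨(RingEquiv.ofLeftInverse (Function.leftInverse_invFun h₁)).trans <|
    (RingEquiv.subringCongr h).trans
      (RingEquiv.ofLeftInverse (Function.leftInverse_invFun h₂)).symm⟩

def IsBimoduleEnd {A B P : Type u} [Ring A] [Ring B] (f : B →+* A) (R : Type u) [Ring R]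
    [AddCommGroup P] [Module A P] [Module Rᵐᵒᵖ P] (φ : AddMonoid.End P) : Prop :=
  (∀ (b : B) (p : P), φ (f b • p) = f b • φ p) ∧ ∀ (r : R) (p : P), φ (op r • p) = op r • φ p

theorem injective_smul_centralizer {A B R P Pd : Type u} [Ring A] [Ring B] [Ring R]
    {f : B →+* A} [AddCommGroup P] [Module A P] [Module Rᵐᵒᵖ P] [AddCommGroup Pd]
    [Module R Pd] (ε : NCT R P Pd ≃+ A)
    (hε : ∀ (a : A) p pd, ε (ncmk R P Pd (a • p) pd) = a * ε (ncmk R P Pd p pd)) :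
    Function.Injective
      ((Module.toAddMonoidEnd A P).comp (Subring.centralizer (Set.range f)).subtype) := by
  have := faithfulSMul_of_nctEquiv ε hε
  exact fun a a' h => Subtype.ext <|
    FaithfulSMul.eq_of_smul_eq_smul (α := P) fun p => DFunLike.congr_fun h p

theorem mem_range_smul_centralizer_iff {A B R P Pd : Type u} [Ring A] [Ring B] [Ring R]
    {f : B →+* A} [AddCommGroup P] [Module A P] [Module Rᵐᵒᵖ P] [SMulCommClass A Rᵐᵒᵖ P]
    [AddCommGroup Pd] [Module R Pd] [Module Aᵐᵒᵖ Pd] [SMulCommClass R Aᵐᵒᵖ Pd]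
    (ε₁ : NCT R P Pd ≃+ A)
    (h₁l : ∀ (a : A) p pd, ε₁ (ncmk R P Pd (a • p) pd) = a * ε₁ (ncmk R P Pd p pd))
    (h₁r : ∀ (a : A) p pd, ε₁ (ncmk R P Pd p (op a • pd)) = ε₁ (ncmk R P Pd p pd) * a)
    (ε₂ : NCT A Pd P ≃+ R)
    (h₂l : ∀ (r : R) pd p, ε₂ (ncmk A Pd P (r • pd) p) = r * ε₂ (ncmk A Pd P pd p))
    (φ : AddMonoid.End P) :
    φ ∈ ((Module.toAddMonoidEnd A P).comp (Subring.centralizer (Set.range f)).subtype).range ↔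
      IsBimoduleEnd f R φ := by
  have := faithfulSMul_of_nctEquiv ε₁ h₁l
  constructor
  · rintro ⟨⟨a, ha⟩, rfl⟩
    refine ⟨fun b p => ?_, fun r p => smul_comm a (op r) p⟩
    change a • f b • p = f b • a • p
    rw [← mul_smul, ← mul_smul, Subring.mem_centralizer_iff.mp ha (f b) ⟨b, rfl⟩]
  · rintro ⟨hB, hR⟩
    obtain ⟨a, ha⟩ : ∃ a : A, ∀ p, φ p = a • p :=
      exists_eq_smul_of_map_op_smul ε₁ h₁l h₁r ε₂ h₂l φ hR
    refine ⟨⟨a, Subring.mem_centralizer_iff.mpr ?_⟩, AddMonoidHom.ext fun p => (ha p).symm⟩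
    rintro _ ⟨b, rfl⟩
    refine FaithfulSMul.eq_of_smul_eq_smul (α := P) fun p => ?_
    calc (f b * a) • p = f b • φ p := by rw [mul_smul, ha]
      _ = (a * f b) • p := by rw [← hB, ha, mul_smul]

noncomputable def rightMul {S R : Type u} [Ring S] [Ring R] {g : S →+* R} [Module S R]
    (hg : ∀ (s : S) (r : R), s • r = g s * r) (Q : Type u) [AddCommGroup Q] [Module Sᵐᵒᵖ Q]
    (r : R) : NCT S Q R →+ NCT S Q R :=
  NCT.map (AddMonoidHom.id Q) (AddMonoidHom.mulRight r) (fun _ _ => rfl) fun s y => by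
    simp only [AddMonoidHom.coe_mulRight, hg, mul_assoc]

noncomputable def centralizerLmul {S R : Type u} [Ring S] [Ring R] {g : S →+* R} [Module S R]
    (hg : ∀ (s : S) (r : R), s • r = g s * r) (Q : Type u) [AddCommGroup Q] [Module Sᵐᵒᵖ Q] :
    Subring.centralizer (Set.range g) →+* AddMonoid.End (NCT S Q R) where
  toFun r := NCT.map (AddMonoidHom.id Q) (AddMonoidHom.mulLeft r.1) (fun _ _ => rfl)
    fun s y => by
      simp only [AddMonoidHom.coe_mulLeft, hg, ← mul_assoc,
        Subring.mem_centralizer_iff.mp r.2 (g s) ⟨s, rfl⟩]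
  map_one' := NCT.addMonoidHom_ext fun q y => by simp; rfl
  map_mul' r r' := NCT.addMonoidHom_ext fun q y => by simp [mul_assoc]; rfl
  map_zero' := NCT.addMonoidHom_ext fun q y => by simp [NCT.ncmk_zero_right]; rfl
  map_add' r r' := NCT.addMonoidHom_ext fun q y => by simp [add_mul, NCT.ncmk_add_right]; rfl

@[simp]
theorem rightMul_ncmk {S R Q : Type u} [Ring S] [Ring R] {g : S →+* R} [Module S R]
    (hg : ∀ (s : S) (r : R), s • r = g s * r) [AddCommGroup Q] [Module Sᵐᵒᵖ Q] (r : R)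
    (q : Q) (y : R) : rightMul hg Q r (ncmk S Q R q y) = ncmk S Q R q (y * r) :=
  rfl

@[simp]
theorem centralizerLmul_ncmk {S R Q : Type u} [Ring S] [Ring R] {g : S →+* R} [Module S R]
    (hg : ∀ (s : S) (r : R), s • r = g s * r) [AddCommGroup Q] [Module Sᵐᵒᵖ Q]
    (r : Subring.centralizer (Set.range g)) (q : Q) (y : R) :
    centralizerLmul hg Q r (ncmk S Q R q y) = ncmk S Q R q (r * y) :=
  rfl

theorem injective_centralizerLmul {B S R Q Qd : Type u} [Ring B] [Ring S] [Ring R]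
    {g : S →+* R} [Module S R] (hg : ∀ (s : S) (r : R), s • r = g s * r)
    [AddCommGroup Q] [Module B Q] [Module Sᵐᵒᵖ Q] [AddCommGroup Qd] [Module Bᵐᵒᵖ Qd]
    (ε : NCT B Qd Q ≃+ S)
    (hε : ∀ (s : S) qd q, ε (ncmk B Qd Q qd (op s • q)) = ε (ncmk B Qd Q qd q) * s) :
    Function.Injective (centralizerLmul hg Q) := fun r r' h =>
  Subtype.ext <| sub_eq_zero.mp <| eq_zero_of_forall_ncmk_eq_zero_right ε hε fun q => by
    simpa [NCT.ncmk_sub_right, sub_eq_zero] using DFunLike.congr_fun h (ncmk S Q R q 1)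

theorem mem_range_centralizerLmul_iff {B S R Q Qd : Type u} [Ring B] [Ring S] [Ring R]
    {g : S →+* R} [Module S R] (hg : ∀ (s : S) (r : R), s • r = g s * r)
    [AddCommGroup Q] [Module B Q] [Module Sᵐᵒᵖ Q] [SMulCommClass B Sᵐᵒᵖ Q]
    [AddCommGroup Qd] [Module S Qd] [Module Bᵐᵒᵖ Qd] [SMulCommClass S Bᵐᵒᵖ Qd]
    (ε₁ : NCT S Q Qd ≃+ B)
    (h₁l : ∀ (b : B) q qd, ε₁ (ncmk S Q Qd (b • q) qd) = b * ε₁ (ncmk S Q Qd q qd))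
    (h₁r : ∀ (b : B) q qd, ε₁ (ncmk S Q Qd q (op b • qd)) = ε₁ (ncmk S Q Qd q qd) * b)
    (ε₂ : NCT B Qd Q ≃+ S)
    (h₂l : ∀ (s : S) qd q, ε₂ (ncmk B Qd Q (s • qd) q) = s * ε₂ (ncmk B Qd Q qd q))
    (h₂r : ∀ (s : S) qd q, ε₂ (ncmk B Qd Q qd (op s • q)) = ε₂ (ncmk B Qd Q qd q) * s)
    (ψ : AddMonoid.End (NCT S Q R)) :
    ψ ∈ (centralizerLmul hg Q).range ↔
      (∀ (b : B) z, ψ (NCT.lsmul b z) = NCT.lsmul b (ψ z)) ∧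
        ∀ r z, ψ (rightMul hg Q r z) = rightMul hg Q r (ψ z) := by
  constructor
  · rintro ⟨r, rfl⟩
    constructor <;> intro _ z <;> induction z using NCT.induction_on <;> simp_all [mul_assoc]
  · rintro ⟨hB, hR⟩
    obtain ⟨r, hr⟩ : ∃ r : R, ∀ q, ψ (ncmk S Q R q 1) = ncmk S Q R q r :=
      exists_forall_apply_ncmk_eq_ncmk ε₁ h₁l h₁r ε₂ h₂l h₂r ψ hB 1
    have hψ (q : Q) (y : R) : ψ (ncmk S Q R q y) = ncmk S Q R q (r * y) :=
      calc ψ (ncmk S Q R q y) = ψ (rightMul hg Q y (ncmk S Q R q 1)) := by simp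
        _ = ncmk S Q R q (r * y) := by rw [hR, hr, rightMul_ncmk]
    refine ⟨⟨r, Subring.mem_centralizer_iff.mpr ?_⟩,
      NCT.addMonoidHom_ext fun q y => (hψ q y).symm⟩
    rintro _ ⟨s, rfl⟩
    refine sub_eq_zero.mp <| eq_zero_of_forall_ncmk_eq_zero_right ε₂ h₂r fun q => ?_
    rw [NCT.ncmk_sub_right, sub_eq_zero]
    calc ncmk S Q R q (g s * r) = ψ (ncmk S Q R (op s • q) 1) := by
          rw [hψ, mul_one, NCT.ncmk_op_smul, hg]
      _ = ncmk S Q R q (r * g s) := by rw [NCT.ncmk_op_smul, hg, mul_one, hψ]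

theorem isBimoduleEnd_addMonoidEndCongr_iff {A B S R Q P : Type u} [Ring A] [Ring B] [Ring S]
    [Ring R] {f : B →+* A} {g : S →+* R} [Module S R] (hg : ∀ (s : S) (r : R), s • r = g s * r)
    [AddCommGroup Q] [Module B Q] [Module Sᵐᵒᵖ Q] [SMulCommClass B Sᵐᵒᵖ Q]
    [AddCommGroup P] [Module A P] [Module Rᵐᵒᵖ P] (e : NCT S Q R ≃+ P)
    (hl : ∀ (b : B) q y, e (ncmk S Q R (b • q) y) = f b • e (ncmk S Q R q y))
    (hr : ∀ (r : R) q y, e (ncmk S Q R q (y * r)) = op r • e (ncmk S Q R q y))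
    (ψ : AddMonoid.End (NCT S Q R)) :
    IsBimoduleEnd f R (e.addMonoidEndCongr ψ) ↔
      (∀ (b : B) z, ψ (NCT.lsmul b z) = NCT.lsmul b (ψ z)) ∧
        ∀ r z, ψ (rightMul hg Q r z) = rightMul hg Q r (ψ z) := by
  have hl' (b : B) (z) : f b • e z = e (NCT.lsmul b z) := by
    induction z using NCT.induction_on <;> simp_all [smul_add]
  have hr' (r : R) (z) : op r • e z = e (rightMul hg Q r z) := by
    induction z using NCT.induction_on <;> simp_all [smul_add]
  simp only [IsBimoduleEnd, AddEquiv.addMonoidEndCongr_apply, e.surjective.forall, hl', hr',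
    e.symm_apply_apply, e.injective.eq_iff]

/-- **Centralizers are Morita invariants of ring extensions.**
If the ring extensions `A ⊇ B` and `R ⊇ S` are Morita equivalent, via
invertible bimodules `P` (an `A`-`R`-bimodule with inverse `Pd`) and `Q` (a
`B`-`S`-bimodule with inverse `Qd`) satisfying `Q ⊗_S R ≅ P` as
`B`-`R`-bimodules, then the centralizers `A^B` and `R^S` are isomorphic as
rings. -/
theorem centralizer_iso_of_morita_extension
    (ePPd : ∃ e : NCT R P Pd ≃+ A,
      (∀ (a : A) (p : P) (q : Pd),
        e (ncmk R P Pd (a • p) q) = a * e (ncmk R P Pd p q)) ∧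
      (∀ (a : A) (p : P) (q : Pd),
        e (ncmk R P Pd p (op a • q)) = e (ncmk R P Pd p q) * a))
    (ePdP : ∃ e : NCT A Pd P ≃+ R,
      (∀ (r : R) (q : Pd) (p : P),
        e (ncmk A Pd P (r • q) p) = r * e (ncmk A Pd P q p)) ∧
      (∀ (r : R) (q : Pd) (p : P),
        e (ncmk A Pd P q (op r • p)) = e (ncmk A Pd P q p) * r))
    (eQQd : ∃ e : NCT S Q Qd ≃+ B,
      (∀ (b : B) (q : Q) (q' : Qd),
        e (ncmk S Q Qd (b • q) q') = b * e (ncmk S Q Qd q q')) ∧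
      (∀ (b : B) (q : Q) (q' : Qd),
        e (ncmk S Q Qd q (op b • q')) = e (ncmk S Q Qd q q') * b))
    (eQdQ : ∃ e : NCT B Qd Q ≃+ S,
      (∀ (s : S) (q' : Qd) (q : Q),
        e (ncmk B Qd Q (s • q') q) = s * e (ncmk B Qd Q q' q)) ∧
      (∀ (s : S) (q' : Qd) (q : Q),
        e (ncmk B Qd Q q' (op s • q)) = e (ncmk B Qd Q q' q) * s))
    (hQR : ∃ e : QtensR g Q ≃+ P,
      (∀ (b : B) (q : Q) (r : R),
        e (qrmk g Q (b • q) r) = f b • e (qrmk g Q q r)) ∧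
      (∀ (r' : R) (q : Q) (r : R),
        e (qrmk g Q q (r * r')) = op r' • e (qrmk g Q q r))) :
    Nonempty (Subring.centralizer (Set.range f) ≃+*
      Subring.centralizer (Set.range g)) := by
  obtain ⟨e₁, h₁l, h₁r⟩ := ePPd
  obtain ⟨e₂, h₂l, -⟩ := ePdP
  obtain ⟨e₃, h₃l, h₃r⟩ := eQQd
  obtain ⟨e₄, h₄l, h₄r⟩ := eQdQ
  obtain ⟨e, hl, hr⟩ := hQR
  let : Module S R := Module.compHom R g
  have hg : ∀ (s : S) (r : R), s • r = g s * r := fun _ _ => rfl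
  -- `QtensR g Q` is `Q ⊗_S R` for this `S`-module structure on `R`
  let e' : NCT S Q R ≃+ P := e
  refine nonempty_ringEquiv_of_range_eq (injective_smul_centralizer e₁ h₁l)
    (φ₂ := (e'.addMonoidEndCongr : AddMonoid.End (NCT S Q R) →+* _).comp (centralizerLmul hg Q))
    (e'.addMonoidEndCongr.injective.comp (injective_centralizerLmul hg e₄ h₄r)) ?_
  ext φ
  rw [mem_range_smul_centralizer_iff e₁ h₁l h₁r e₂ h₂l, ← RingHom.map_range,
    Subring.mem_map_equiv, mem_range_centralizerLmul_iff hg e₃ h₃l h₃r e₄ h₄l h₄r,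
    ← isBimoduleEnd_addMonoidEndCongr_iff hg e' hl hr, RingEquiv.apply_symm_apply]
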